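/- Define for integers d ≥ 2 and 0 ≤ i ≤ d the rational functions f_i(τ) = C(d,i)·⟨τ⟩_i⟨τ⟩_{d−i}/⟨2τ⟩_d − C(d−2,i−1)·⟨τ⟩_{i−1}⟨τ⟩_{d−i−1}/⟨2τ⟩_{d−2}, and for 0 ≤ i ≤ d−2 set g_i(τ) = C(d−2,i)·((τ+d−1)/τ)·⟨τ⟩_{i+1}⟨τ⟩_{d−i−1}/⟨2τ⟩_d, with g_{−1} = g_{−2} = g_{d−1} = g_d = 0. Then f_i = g_{i−2} − 2g_{i−1} + g_i for all 0 ≤ i ≤ d. -/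
import Mathlib


open Finset

/-- The rising factorial (Pochhammer symbol) `⟨x⟩_k = x(x+1)⋯(x+k-1)`. -/
noncomputable def poch (x : ℝ) (k : ℕ) : ℝ := ∏ i ∈ Finset.range k, (x + i)

/-- Binomial coefficient with an integer lower index (zero when the index is negative). -/
def chooseZ (n : ℕ) (k : ℤ) : ℕ := if k < 0 then 0 else n.choose k.toNat

/-- The coefficients `f_i` of the two-variable Jack difference. -/
noncomputable def fCoeff (d i : ℕ) (τ : ℝ) : ℝ :=
  (d.choose i) * poch τ i * poch τ (d - i) / poch (2 * τ) d -
    (chooseZ (d - 2) ((i : ℤ) - 1)) * poch τ (i - 1) * poch τ (d - i - 1) /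
      poch (2 * τ) (d - 2)

/-- The auxiliary coefficients `g_i`, extended by zero outside `0 ≤ i ≤ d-2`. -/
noncomputable def gCoeff (d : ℕ) (i : ℤ) (τ : ℝ) : ℝ :=
  if 0 ≤ i ∧ i ≤ (d : ℤ) - 2 then
    ((d - 2).choose i.toNat) * ((τ + d - 1) / τ) *
      poch τ (i.toNat + 1) * poch τ (d - i.toNat - 1) / poch (2 * τ) d
  else 0

lemma poch_succ (x : ℝ) (k : ℕ) : poch x (k+1) = poch x k * (x + k) := by
  simp [poch, Finset.prod_range_succ]

lemma poch_zero (x : ℝ) : poch x 0 = 1 := by simp [poch]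

lemma poch_one (x : ℝ) : poch x 1 = x := by simp [poch]

lemma poch_two (x : ℝ) : poch x 2 = x * (x + 1) := by
  simp [poch, Finset.prod_range_succ]

lemma poch_pos {x : ℝ} (hx : 0 < x) (k : ℕ) : 0 < poch x k := by
  apply Finset.prod_pos; intro j _; positivity

lemma chooseZ_natCast (n k : ℕ) : chooseZ n (k : ℤ) = n.choose k := by simp [chooseZ]

lemma chooseZ_neg (n : ℕ) (k : ℤ) (hk : k < 0) : chooseZ n k = 0 := by
  rw [chooseZ, if_pos hk]

lemma gCoeff_of_le (d k : ℕ) (hd : 2 ≤ d) (hk : k ≤ d - 2) (τ : ℝ) :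
    gCoeff d (k : ℤ) τ =
      ((d-2).choose k) * ((τ + d - 1)/τ) * poch τ (k+1) * poch τ (d - k - 1) /
        poch (2*τ) d := by
  rw [gCoeff, if_pos ⟨Int.natCast_nonneg k, by omega⟩]
  simp

lemma gCoeff_of_neg (d : ℕ) (k : ℤ) (hk : k < 0) (τ : ℝ) : gCoeff d k τ = 0 := by
  rw [gCoeff, if_neg (by omega)]

lemma gCoeff_of_gt (d : ℕ) (k : ℤ) (hk : (d:ℤ) - 2 < k) (τ : ℝ) : gCoeff d k τ = 0 := by
  rw [gCoeff, if_neg (by omega)]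

lemma pascal2 (n k : ℕ) :
    (n+2).choose (k+2) = n.choose k + 2 * n.choose (k+1) + n.choose (k+2) := by
  simp [Nat.choose_succ_succ]
  ring

set_option maxHeartbeats 1000000 in
/-- Second-difference identity: `f_i = g_{i-2} - 2g_{i-1} + g_i` for `0 ≤ i ≤ d`. -/
theorem fCoeff_eq_second_difference (d : ℕ) (hd : 2 ≤ d) (i : ℕ) (hi : i ≤ d)
    (τ : ℝ) (hτ : 0 < τ) :
    fCoeff d i τ =
      gCoeff d ((i : ℤ) - 2) τ - 2 * gCoeff d ((i : ℤ) - 1) τ + gCoeff d i τ := by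
  have h2τ : (0:ℝ) < 2 * τ := by positivity
  by_cases h0 : i = 0
  · subst h0
    obtain ⟨e, rfl⟩ : ∃ e, d = e + 2 := ⟨d - 2, by omega⟩
    rw [gCoeff_of_neg _ _ (by omega), gCoeff_of_neg _ _ (by omega),
      gCoeff_of_le _ _ (by omega) (by omega)]
    rw [fCoeff, chooseZ_neg _ _ (by omega)]
    have e2 : e + 2 - 0 - 1 = e + 1 := by omega
    have e1 : e + 2 - 0 = e + 2 := by omega
    rw [e2, e1]
    have hpe2 : poch τ (e+2) = poch τ (e+1) * (τ + ((e:ℝ)+1)) := by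
      rw [show e+2 = (e+1)+1 from rfl, poch_succ]; push_cast; ring
    rw [hpe2]
    have ha := (poch_pos hτ (e+1)).ne'
    have hb := (poch_pos h2τ (e+2)).ne'
    norm_num [poch_zero, poch_one]
    push_cast
    field_simp
    ring
  by_cases hdc : i = d
  · obtain ⟨e, rfl⟩ : ∃ e, d = e + 2 := ⟨d - 2, by omega⟩
    subst hdc
    rw [show ((e+2:ℕ):ℤ) - 2 = ((e:ℕ):ℤ) by push_cast; ring,
      gCoeff_of_le _ _ (by omega) (by omega),
      gCoeff_of_gt _ _ (by omega), gCoeff_of_gt _ _ (by omega)]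
    rw [fCoeff, show ((e+2:ℕ):ℤ) - 1 = ((e+1:ℕ):ℤ) by push_cast; ring,
      chooseZ_natCast]
    have e2 : e + 2 - (e+2) - 1 = 0 := by omega
    have e1 : e + 2 - (e+2) = 0 := by omega
    have e3 : e + 2 - 2 = e := by omega
    have e4 : e + 2 - e - 1 = 1 := by omega
    have e5 : e + 2 - 1 = e + 1 := by omega
    rw [e2, e1, e3, e4, e5]
    have hch : e.choose (e+1) = 0 := by
      apply Nat.choose_eq_zero_of_lt; omega
    have hpe2 : poch τ (e+2) = poch τ (e+1) * (τ + ((e:ℝ)+1)) := by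
      rw [show e+2 = (e+1)+1 from rfl, poch_succ]; push_cast; ring
    rw [hch, hpe2]
    have ha := (poch_pos hτ (e+1)).ne'
    have hb := (poch_pos h2τ (e+2)).ne'
    have hb0 := (poch_pos h2τ e).ne'
    norm_num [poch_zero, poch_one]
    push_cast
    field_simp
    ring
  by_cases h1 : i = 1
  · subst h1
    by_cases hd2 : d = 2
    · subst hd2
      rw [gCoeff_of_neg _ _ (by omega),
        show ((1:ℕ):ℤ) - 1 = ((0:ℕ):ℤ) by norm_num,
        gCoeff_of_le _ _ (by omega) (by omega),
        gCoeff_of_gt _ _ (by omega), fCoeff,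
        show ((1:ℕ):ℤ) - 1 = ((0:ℕ):ℤ) by norm_num, chooseZ_natCast]
      norm_num [poch_zero, poch_one, poch_two]
      field_simp
      ring
    · obtain ⟨e, rfl⟩ : ∃ e, d = e + 3 := ⟨d - 3, by omega⟩
      rw [gCoeff_of_neg _ _ (by omega),
        show ((1:ℕ):ℤ) - 1 = ((0:ℕ):ℤ) by norm_num,
        gCoeff_of_le _ _ (by omega) (by omega),
        gCoeff_of_le _ 1 (by omega) (by omega), fCoeff,
        show ((1:ℕ):ℤ) - 1 = ((0:ℕ):ℤ) by norm_num, chooseZ_natCast]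
      have e1 : e + 3 - 1 - 1 = e + 1 := by omega
      have e2 : e + 3 - 1 = e + 2 := by omega
      have e3 : e + 3 - 2 = e + 1 := by omega
      have e4 : e + 3 - 0 - 1 = e + 2 := by omega
      have e5 : (1:ℕ) - 1 = 0 := rfl
      rw [e1, e2, e3, e4, e5]
      have hpe2 : poch τ (e+2) = poch τ (e+1) * (τ + ((e:ℝ)+1)) := by
        rw [show e+2 = (e+1)+1 from rfl, poch_succ]; push_cast; ring
      have hq : poch (2*τ) (e+3) =
          poch (2*τ) (e+1) * (2*τ + ((e:ℝ)+1)) * (2*τ + ((e:ℝ)+2)) := by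
        rw [show e+3 = (e+2)+1 from rfl, poch_succ,
          show e+2 = (e+1)+1 from rfl, poch_succ]
        push_cast; ring
      rw [hpe2, hq]
      have ha := (poch_pos hτ (e+1)).ne'
      have hb := (poch_pos h2τ (e+1)).ne'
      have hc : (2*τ + ((e:ℝ)+1)) ≠ 0 := by positivity
      have hd' : (2*τ + ((e:ℝ)+2)) ≠ 0 := by positivity
      norm_num [poch_zero, poch_one, poch_two]
      push_cast
      field_simp
      ring
  by_cases hdm : i = d - 1
  · obtain ⟨e, rfl⟩ : ∃ e, d = e + 3 := ⟨d - 3, by omega⟩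
    obtain rfl : i = e + 2 := by omega
    rw [show ((e+2:ℕ):ℤ) - 2 = ((e:ℕ):ℤ) by push_cast; ring,
      gCoeff_of_le _ _ (by omega) (by omega),
      show ((e+2:ℕ):ℤ) - 1 = ((e+1:ℕ):ℤ) by push_cast; ring,
      gCoeff_of_le _ _ (by omega) (by omega),
      gCoeff_of_gt _ _ (by omega), fCoeff,
      show ((e+2:ℕ):ℤ) - 1 = ((e+1:ℕ):ℤ) by push_cast; ring, chooseZ_natCast]
    have e1 : e + 3 - (e+2) - 1 = 0 := by omega
    have e2 : e + 3 - (e+2) = 1 := by omega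
    have e3 : e + 3 - 2 = e + 1 := by omega
    have e4 : e + 2 - 1 = e + 1 := by omega
    have e5 : e + 3 - e - 1 = 2 := by omega
    have e6 : e + 3 - (e+1) - 1 = 1 := by omega
    rw [e1, e2, e3, e4, e5, e6]
    have hch1 : (e+3).choose (e+2) = e + 3 := by
      rw [show e+3 = (e+2)+1 from rfl, Nat.choose_succ_self_right]
    have hch2 : (e+1).choose e = e + 1 := Nat.choose_succ_self_right e
    have hpe2 : poch τ (e+2) = poch τ (e+1) * (τ + ((e:ℝ)+1)) := by
      rw [show e+2 = (e+1)+1 from rfl, poch_succ]; push_cast; ring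
    have hq : poch (2*τ) (e+3) =
        poch (2*τ) (e+1) * (2*τ + ((e:ℝ)+1)) * (2*τ + ((e:ℝ)+2)) := by
      rw [show e+3 = (e+2)+1 from rfl, poch_succ,
        show e+2 = (e+1)+1 from rfl, poch_succ]
      push_cast; ring
    rw [hch1, hch2, hpe2, hq]
    have ha := (poch_pos hτ (e+1)).ne'
    have hb := (poch_pos h2τ (e+1)).ne'
    have hc : (2*τ + ((e:ℝ)+1)) ≠ 0 := by positivity
    have hd' : (2*τ + ((e:ℝ)+2)) ≠ 0 := by positivity
    norm_num [poch_zero, poch_one, poch_two, Nat.choose_self]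
    push_cast
    field_simp
    ring
  · -- general case 2 ≤ i ≤ d - 2
    obtain ⟨j, rfl⟩ : ∃ j, i = j + 2 := ⟨i - 2, by omega⟩
    obtain ⟨m, rfl⟩ : ∃ m, d = j + m + 4 := ⟨d - (j + 2) - 2, by omega⟩
    rw [show ((j+2:ℕ):ℤ) - 2 = ((j:ℕ):ℤ) by push_cast; ring,
      gCoeff_of_le _ _ (by omega) (by omega),
      show ((j+2:ℕ):ℤ) - 1 = ((j+1:ℕ):ℤ) by push_cast; ring,
      gCoeff_of_le _ _ (by omega) (by omega),
      gCoeff_of_le _ (j+2) (by omega) (by omega), fCoeff,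
      show ((j+2:ℕ):ℤ) - 1 = ((j+1:ℕ):ℤ) by push_cast; ring, chooseZ_natCast]
    have e1 : j + m + 4 - (j+2) - 1 = m + 1 := by omega
    have e2 : j + m + 4 - (j+2) = m + 2 := by omega
    have e3 : j + m + 4 - 2 = j + m + 2 := by omega
    have e4 : j + 2 - 1 = j + 1 := by omega
    have e5 : j + m + 4 - j - 1 = m + 3 := by omega
    have e6 : j + m + 4 - (j+1) - 1 = m + 2 := by omega
    rw [e1, e2, e3, e4, e5, e6]
    have pj2 : poch τ (j+2) = poch τ (j+1) * (τ + ((j:ℝ)+1)) := by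
      rw [show j+2 = (j+1)+1 from rfl, poch_succ]; push_cast; ring
    have pj3 : poch τ (j+3) = poch τ (j+1) * (τ + ((j:ℝ)+1)) * (τ + ((j:ℝ)+2)) := by
      rw [show j+3 = (j+2)+1 from rfl, poch_succ, pj2]; push_cast; ring
    have pm2 : poch τ (m+2) = poch τ (m+1) * (τ + ((m:ℝ)+1)) := by
      rw [show m+2 = (m+1)+1 from rfl, poch_succ]; push_cast; ring
    have pm3 : poch τ (m+3) = poch τ (m+1) * (τ + ((m:ℝ)+1)) * (τ + ((m:ℝ)+2)) := by
      rw [show m+3 = (m+2)+1 from rfl, poch_succ, pm2]; push_cast; ring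
    have pq : poch (2*τ) (j+m+4) =
        poch (2*τ) (j+m+2) * (2*τ + ((j:ℝ)+(m:ℝ)+2)) * (2*τ + ((j:ℝ)+(m:ℝ)+3)) := by
      rw [show j+m+4 = (j+m+3)+1 from rfl, poch_succ,
        show j+m+3 = (j+m+2)+1 from rfl, poch_succ]
      push_cast; ring
    rw [pj3, pj2, pm3, pm2, pq]
    have hpas : ((j+m+4).choose (j+2) : ℝ) =
        ((j+m+2).choose j : ℝ) + 2 * ((j+m+2).choose (j+1) : ℝ)
          + ((j+m+2).choose (j+2) : ℝ) := by
      rw [show j+m+4 = (j+m+2)+2 from by ring, pascal2]; push_cast; ring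
    have h1n : (j+m+2).choose (j+1) * (j+1) = (j+m+2).choose j * (m+2) := by
      have h := Nat.choose_succ_right_eq (j+m+2) j
      rwa [show j+m+2 - j = m+2 from by omega] at h
    have h2n : (j+m+2).choose (j+2) * (j+2) = (j+m+2).choose (j+1) * (m+1) := by
      have h := Nat.choose_succ_right_eq (j+m+2) (j+1)
      rwa [show j+m+2 - (j+1) = m+1 from by omega] at h
    have ha : ((j+m+2).choose j : ℝ) =
        ((j+m+2).choose (j+1) : ℝ) * ((j:ℝ)+1) / ((m:ℝ)+2) := by
      have h := congrArg (Nat.cast : ℕ → ℝ) h1n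
      push_cast at h
      field_simp
      linarith
    have hc : ((j+m+2).choose (j+2) : ℝ) =
        ((j+m+2).choose (j+1) : ℝ) * ((m:ℝ)+1) / ((j:ℝ)+2) := by
      have h := congrArg (Nat.cast : ℕ → ℝ) h2n
      push_cast at h
      field_simp
      linarith
    rw [hpas, ha, hc]
    have hA := (poch_pos hτ (j+1)).ne'
    have hB := (poch_pos hτ (m+1)).ne'
    have hC := (poch_pos h2τ (j+m+2)).ne'
    have hq1 : (2*τ + ((j:ℝ)+(m:ℝ)+2)) ≠ 0 := by positivity
    have hq2 : (2*τ + ((j:ℝ)+(m:ℝ)+3)) ≠ 0 := by positivity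
    push_cast
    field_simp
    ring
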